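/- Let A and B be n×n complex positive definite matrices with A ≤ B in the Loewner order, and let p ∈ (0,1]. Then J_p(A,B) − 2·R_p(A,B) ≤ T_p(A|B) ≤ J_p(A,B) − 2·L_p(A,B) in the Loewner order, where J_p(A,B) := (1/2)·(A #_p B − A ♮_{p−1} B + B − A), L_p(A,B) := (1/24)·(p−1)·(p−2)·(A #_p B − 3·A ♮_{p−1} B + 3·A ♮_{p−2} B − A ♮_{p−3} B) and R_p(A,B) := (1/24)·(p−1)·(p−2)·(A ♮_3 B − 3·A ♮_2 B + 3·B − A). -/

import Mathlib

open Matrix ComplexOrder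

/-- Real power of a (Hermitian) complex matrix via the continuous functional calculus,
corresponding to `Matrix.PosDef.rpow` on positive definite matrices. -/
noncomputable def mrpow {n : Type*} [Fintype n] [DecidableEq n]
    (A : Matrix n n ℂ) (r : ℝ) : Matrix n n ℂ :=
  cfc (fun t : ℝ => t ^ r) A

/-- The Loewner order: `loe X Y` means `Y - X` is positive semidefinite. -/
def loe {n : Type*} [Fintype n] (X Y : Matrix n n ℂ) : Prop :=
  (Y - X).PosSemidef

/-- `A ♮ᵣ B = A^{1/2} (A^{-1/2} B A^{-1/2})^r A^{1/2}`; for `r ∈ [0,1]` this is the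
weighted geometric mean `A #ᵣ B`. -/
noncomputable def natu {n : Type*} [Fintype n] [DecidableEq n]
    (A B : Matrix n n ℂ) (r : ℝ) : Matrix n n ℂ :=
  mrpow A (1 / 2) * mrpow (mrpow A (-(1 / 2)) * B * mrpow A (-(1 / 2))) r * mrpow A (1 / 2)

/-- The Tsallis relative operator entropy `T_p(A|B) = (A #_p B - A) / p`. -/
noncomputable def TsallisEntropy {n : Type*} [Fintype n] [DecidableEq n]
    (A B : Matrix n n ℂ) (p : ℝ) : Matrix n n ℂ :=
  (1 / p : ℝ) • (natu A B p - A)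

/-- `J_p(A,B) = (1/2)(A #_p B - A ♮_{p-1} B + B - A)`. -/
noncomputable def Jp {n : Type*} [Fintype n] [DecidableEq n]
    (A B : Matrix n n ℂ) (p : ℝ) : Matrix n n ℂ :=
  (1 / 2 : ℝ) • (natu A B p - natu A B (p - 1) + B - A)

/-- `L_p(A,B) = (1/24)(p-1)(p-2)(A #_p B - 3 A ♮_{p-1} B + 3 A ♮_{p-2} B - A ♮_{p-3} B)`. -/
noncomputable def Lp {n : Type*} [Fintype n] [DecidableEq n]
    (A B : Matrix n n ℂ) (p : ℝ) : Matrix n n ℂ :=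
  ((1 / 24) * (p - 1) * (p - 2) : ℝ) •
    (natu A B p - (3 : ℝ) • natu A B (p - 1) + (3 : ℝ) • natu A B (p - 2) - natu A B (p - 3))

/-- `R_p(A,B) = (1/24)(p-1)(p-2)(A ♮_3 B - 3 A ♮_2 B + 3 B - A)`. -/
noncomputable def Rp {n : Type*} [Fintype n] [DecidableEq n]
    (A B : Matrix n n ℂ) (p : ℝ) : Matrix n n ℂ :=
  ((1 / 24) * (p - 1) * (p - 2) : ℝ) •
    (natu A B 3 - (3 : ℝ) • natu A B 2 + (3 : ℝ) • B - A)


/-!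
Conjugation by `A^{-1/2}` turns each of `T_p`, `J_p`, `L_p`, `R_p` into `A^{1/2} f(C) A^{1/2}` for a
scalar function `f`, where `C = A^{-1/2} B A^{-1/2} ≥ 1`; so the Loewner inequalities follow from
scalar inequalities on `[1, ∞)`. For `f t = t^(p-1)`, `T_p` corresponds to `∫₁ˣ f` and `J_p` to its
trapezoid approximation `(x - 1)(f 1 + f x)/2`. The trapezoid error lies between `(x - 1)³/12` times
the extreme values of `f'' t = (p-1)(p-2) t^(p-3)` on `[1, x]`, attained at `t = x` and `t = 1`;
these two bounds are `2 L_p` and `2 R_p`.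
-/

open scoped MatrixOrder

section Trapezoid

open Set

theorem monotoneOn_Icc_of_hasDerivAt_nonneg {g g' : ℝ → ℝ} {a b : ℝ}
    (hg : ∀ x ∈ Icc a b, HasDerivAt g (g' x) x) (hg' : ∀ x ∈ Icc a b, 0 ≤ g' x) :
    MonotoneOn g (Icc a b) := by
  refine monotoneOn_of_hasDerivWithinAt_nonneg (f' := g') (convex_Icc a b)
    (fun x hx ↦ (hg x hx).continuousAt.continuousWithinAt) (fun x hx ↦ ?_) (fun x hx ↦ ?_)
  · exact (hg x (interior_subset hx)).hasDerivWithinAt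
  · exact hg' x (interior_subset hx)

theorem mul_cube_div_twelve_le_trapezoid_error {F f f' f'' : ℝ → ℝ} {a b m : ℝ} (hab : a ≤ b)
    (hF : ∀ x ∈ Icc a b, HasDerivAt F (f x) x) (hf : ∀ x ∈ Icc a b, HasDerivAt f (f' x) x)
    (hf' : ∀ x ∈ Icc a b, HasDerivAt f' (f'' x) x) (hm : ∀ x ∈ Icc a b, m ≤ f'' x) :
    m * (b - a) ^ 3 / 12 ≤ (b - a) * (f a + f b) / 2 - (F b - F a) := by
  have hmem : a ∈ Icc a b := left_mem_Icc.2 hab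
  -- `φ x` is the error on `[a, x]` minus the claimed bound: `φ a = 0`, `φ' = ψ`, `ψ a = 0` and
  -- `ψ' x = (x - a) (f'' x - m) / 2 ≥ 0`.
  set ψ : ℝ → ℝ := fun x ↦ (f a - f x) / 2 + (x - a) * f' x / 2 - m * (x - a) ^ 2 / 4
  set φ : ℝ → ℝ := fun x ↦ (x - a) * (f a + f x) / 2 - (F x - F a) - m * (x - a) ^ 3 / 12
  have hψ_deriv : ∀ x ∈ Icc a b, HasDerivAt ψ ((x - a) * (f'' x - m) / 2) x := by
    intro x hx
    have hlin : HasDerivAt (fun x : ℝ ↦ x - a) 1 x := (hasDerivAt_id x).sub_const a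
    refine ((((hf x hx).const_sub (f a)).div_const 2).fun_add
      ((hlin.fun_mul (hf' x hx)).div_const 2) |>.fun_sub
      (((hlin.fun_pow 2).const_mul m).div_const 4)).congr_deriv ?_
    simp only [Nat.cast_ofNat, Nat.add_one_sub_one, pow_one]
    ring
  have hψ : ∀ x ∈ Icc a b, 0 ≤ ψ x := by
    intro x hx
    have hmono := monotoneOn_Icc_of_hasDerivAt_nonneg hψ_deriv fun y hy ↦
      div_nonneg (mul_nonneg (sub_nonneg.2 hy.1) (sub_nonneg.2 (hm y hy))) zero_le_two
    simpa [ψ] using hmono hmem hx hx.1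
  have hφ_deriv : ∀ x ∈ Icc a b, HasDerivAt φ (ψ x) x := by
    intro x hx
    have hlin : HasDerivAt (fun x : ℝ ↦ x - a) 1 x := (hasDerivAt_id x).sub_const a
    refine (((hlin.fun_mul ((hf x hx).const_add (f a))).div_const 2).fun_sub
      ((hF x hx).sub_const (F a)) |>.fun_sub
      (((hlin.fun_pow 3).const_mul m).div_const 12)).congr_deriv ?_
    simp only [ψ, Nat.cast_ofNat, Nat.add_one_sub_one]
    ring
  have hmono := monotoneOn_Icc_of_hasDerivAt_nonneg hφ_deriv hψ
  have := hmono hmem (right_mem_Icc.2 hab) hab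
  simp only [φ, sub_self] at this
  linarith

theorem trapezoid_error_le_mul_cube_div_twelve {F f f' f'' : ℝ → ℝ} {a b M : ℝ} (hab : a ≤ b)
    (hF : ∀ x ∈ Icc a b, HasDerivAt F (f x) x) (hf : ∀ x ∈ Icc a b, HasDerivAt f (f' x) x)
    (hf' : ∀ x ∈ Icc a b, HasDerivAt f' (f'' x) x) (hM : ∀ x ∈ Icc a b, f'' x ≤ M) :
    (b - a) * (f a + f b) / 2 - (F b - F a) ≤ M * (b - a) ^ 3 / 12 := by
  have := mul_cube_div_twelve_le_trapezoid_error (F := -F) (f := -f) (f' := -f') (f'' := -f'')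
    (m := -M) hab (fun x hx ↦ (hF x hx).neg) (fun x hx ↦ (hf x hx).neg)
    (fun x hx ↦ (hf' x hx).neg) (fun x hx ↦ neg_le_neg (hM x hx))
  simp only [Pi.neg_apply] at this
  linarith

theorem rpow_sub_three_mul_sub_one_pow_three {x : ℝ} (hx : x ≠ 0) (p : ℝ) :
    x ^ (p - 3) * (x - 1) ^ 3 = x ^ p - 3 * x ^ (p - 1) + 3 * x ^ (p - 2) - x ^ (p - 3) := by
  have hshift (k : ℕ) (q : ℝ) (hq : q = p - 3 + k) : x ^ q = x ^ (p - 3) * x ^ k := by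
    rw [hq, Real.rpow_add_natCast hx]
  rw [hshift 3 p (by push_cast; ring), hshift 2 (p - 1) (by push_cast; ring),
    hshift 1 (p - 2) (by push_cast; ring)]
  ring

theorem rpow_trapezoid_error_bounds {p x : ℝ} (hp0 : p ≠ 0) (hp1 : p ≤ 1) (hx : 1 ≤ x) :
    (p - 1) * (p - 2) / 12 * (x ^ p - 3 * x ^ (p - 1) + 3 * x ^ (p - 2) - x ^ (p - 3)) ≤
        (x ^ p - x ^ (p - 1) + x - 1) / 2 - (x ^ p - 1) / p ∧
      (x ^ p - x ^ (p - 1) + x - 1) / 2 - (x ^ p - 1) / p ≤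
        (p - 1) * (p - 2) / 12 * (x - 1) ^ 3 := by
  have hpos : ∀ t ∈ Icc 1 x, 0 < t := fun t ht ↦ zero_lt_one.trans_le ht.1
  have hderiv (r : ℝ) {t : ℝ} (ht : t ∈ Icc 1 x) :
      HasDerivAt (fun t : ℝ ↦ t ^ r) (r * t ^ (r - 1)) t :=
    Real.hasDerivAt_rpow_const (Or.inl (hpos t ht).ne')
  have hF : ∀ t ∈ Icc 1 x, HasDerivAt (fun t : ℝ ↦ t ^ p / p) (t ^ (p - 1)) t :=
    fun t ht ↦ ((hderiv p ht).div_const p).congr_deriv (by field_simp)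
  have hf : ∀ t ∈ Icc 1 x, HasDerivAt (fun t : ℝ ↦ t ^ (p - 1)) ((p - 1) * t ^ (p - 2)) t :=
    fun t ht ↦ (hderiv (p - 1) ht).congr_deriv (by ring_nf)
  have hf' : ∀ t ∈ Icc 1 x, HasDerivAt (fun t : ℝ ↦ (p - 1) * t ^ (p - 2))
      ((p - 1) * (p - 2) * t ^ (p - 3)) t :=
    fun t ht ↦ ((hderiv (p - 2) ht).const_mul (p - 1)).congr_deriv (by ring_nf)
  have hx0 : x ≠ 0 := (hpos x ⟨hx, le_rfl⟩).ne'
  have hxp : x ^ p = x ^ (p - 1) * x := by rw [← Real.rpow_add_one hx0, sub_add_cancel]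
  have hc : 0 ≤ (p - 1) * (p - 2) := mul_nonneg_of_nonpos_of_nonpos (by linarith) (by linarith)
  constructor
  · have h := mul_cube_div_twelve_le_trapezoid_error hx hF hf hf' fun t ht ↦
      mul_le_mul_of_nonneg_left (Real.rpow_le_rpow_of_nonpos (hpos t ht) ht.2 (by linarith)) hc
    rw [← rpow_sub_three_mul_sub_one_pow_three hx0]
    simp only [Real.one_rpow] at h
    linear_combination h - hxp / 2
  · have h := trapezoid_error_le_mul_cube_div_twelve hx hF hf hf' fun t ht ↦
      mul_le_of_le_one_right hc (Real.rpow_le_one_of_one_le_of_nonpos ht.1 (by linarith))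
    simp only [Real.one_rpow] at h
    linear_combination h + hxp / 2

end Trapezoid

section OpPerspective

variable {n : Type*} [Fintype n] [DecidableEq n] {A B : Matrix n n ℂ}

theorem continuousOn_spectrum_real (M : Matrix n n ℂ) (f : ℝ → ℝ) :
    ContinuousOn f (spectrum ℝ M) :=
  M.finite_real_spectrum.continuousOn f

theorem mrpow_isSelfAdjoint (A : Matrix n n ℂ) (r : ℝ) : IsSelfAdjoint (mrpow A r) :=
  cfc_predicate _ _

theorem mrpow_add (hA : A.PosDef) (r s : ℝ) : mrpow A (r + s) = mrpow A r * mrpow A s := by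
  rw [mrpow, mrpow, mrpow, ← cfc_mul _ _ A (continuousOn_spectrum_real _ _)
    (continuousOn_spectrum_real _ _)]
  refine cfc_congr fun x hx ↦ Real.rpow_add ?_ r s
  rw [hA.isHermitian.spectrum_real_eq_range_eigenvalues] at hx
  obtain ⟨i, rfl⟩ := hx
  exact hA.eigenvalues_pos i

theorem mrpow_zero (hA : IsSelfAdjoint A) : mrpow A 0 = 1 := by
  simp only [mrpow, Real.rpow_zero]
  exact cfc_const_one ℝ A

theorem mrpow_one (hA : IsSelfAdjoint A) : mrpow A 1 = A := by
  simp only [mrpow, Real.rpow_one]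
  exact cfc_id' ℝ A

theorem mrpow_half_mul_mrpow_neg_half (hA : A.PosDef) :
    mrpow A (1 / 2) * mrpow A (-(1 / 2)) = 1 := by
  rw [← mrpow_add hA, add_neg_cancel, mrpow_zero hA.isHermitian.isSelfAdjoint]

theorem mrpow_neg_half_mul_mrpow_half (hA : A.PosDef) :
    mrpow A (-(1 / 2)) * mrpow A (1 / 2) = 1 := by
  rw [← mrpow_add hA, neg_add_cancel, mrpow_zero hA.isHermitian.isSelfAdjoint]

theorem mrpow_half_mul_self (hA : A.PosDef) : mrpow A (1 / 2) * mrpow A (1 / 2) = A := by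
  rw [← mrpow_add hA, add_halves, mrpow_one hA.isHermitian.isSelfAdjoint]

noncomputable def opPerspective (f : ℝ → ℝ) (A B : Matrix n n ℂ) : Matrix n n ℂ :=
  mrpow A (1 / 2) * cfc f (mrpow A (-(1 / 2)) * B * mrpow A (-(1 / 2))) * mrpow A (1 / 2)

theorem opPerspective_rpow (r : ℝ) : opPerspective (fun x ↦ x ^ r) A B = natu A B r := rfl

theorem opPerspective_add (f g : ℝ → ℝ) :
    opPerspective (fun x ↦ f x + g x) A B = opPerspective f A B + opPerspective g A B := by
  rw [opPerspective, cfc_add _ _ _ (continuousOn_spectrum_real _ _)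
    (continuousOn_spectrum_real _ _), Matrix.mul_add, Matrix.add_mul]
  rfl

theorem opPerspective_sub (f g : ℝ → ℝ) :
    opPerspective (fun x ↦ f x - g x) A B = opPerspective f A B - opPerspective g A B := by
  rw [opPerspective, cfc_sub _ _ _ (continuousOn_spectrum_real _ _)
    (continuousOn_spectrum_real _ _), Matrix.mul_sub, Matrix.sub_mul]
  rfl

theorem opPerspective_const_mul (c : ℝ) (f : ℝ → ℝ) :
    opPerspective (fun x ↦ c * f x) A B = c • opPerspective f A B := by
  rw [opPerspective, cfc_const_mul _ _ _ (continuousOn_spectrum_real _ _),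
    Matrix.mul_smul, Matrix.smul_mul]
  rfl

theorem isSelfAdjoint_mrpow_mul_mul_mrpow (hB : B.IsHermitian) (r : ℝ) :
    IsSelfAdjoint (mrpow A r * B * mrpow A r) :=
  hB.isSelfAdjoint.conjugate_self (mrpow_isSelfAdjoint A _)

theorem natu_zero (hA : A.PosDef) (hB : B.IsHermitian) : natu A B 0 = A := by
  rw [natu, mrpow_zero (isSelfAdjoint_mrpow_mul_mul_mrpow hB _), Matrix.mul_one,
    mrpow_half_mul_self hA]

theorem natu_one (hA : A.PosDef) (hB : B.IsHermitian) : natu A B 1 = B := by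
  rw [natu, mrpow_one (isSelfAdjoint_mrpow_mul_mul_mrpow hB _)]
  calc _ = (mrpow A (1 / 2) * mrpow A (-(1 / 2))) * B * (mrpow A (-(1 / 2)) * mrpow A (1 / 2)) := by
        simp only [Matrix.mul_assoc]
    _ = B := by
        rw [mrpow_half_mul_mrpow_neg_half hA, mrpow_neg_half_mul_mrpow_half hA, one_mul, mul_one]

theorem mrpow_neg_half_conj_self (hA : A.PosDef) :
    mrpow A (-(1 / 2)) * A * mrpow A (-(1 / 2)) = 1 :=
  calc _ = mrpow A (-(1 / 2)) * (mrpow A (1 / 2) * mrpow A (1 / 2)) * mrpow A (-(1 / 2)) := by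
        rw [mrpow_half_mul_self hA]
    _ = (mrpow A (-(1 / 2)) * mrpow A (1 / 2)) * (mrpow A (1 / 2) * mrpow A (-(1 / 2))) := by
        simp only [Matrix.mul_assoc]
    _ = 1 := by rw [mrpow_half_mul_mrpow_neg_half hA, mrpow_neg_half_mul_mrpow_half hA, one_mul]

theorem one_le_mrpow_neg_half_conj (hA : A.PosDef) (hAB : A ≤ B) :
    1 ≤ mrpow A (-(1 / 2)) * B * mrpow A (-(1 / 2)) := by
  rw [← sub_nonneg, ← mrpow_neg_half_conj_self hA, ← Matrix.sub_mul, ← Matrix.mul_sub]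
  exact (mrpow_isSelfAdjoint A _).conjugate_nonneg (sub_nonneg.2 hAB)

theorem opPerspective_mono (hA : A.PosDef) (hAB : A ≤ B) {f g : ℝ → ℝ}
    (hfg : ∀ x, 1 ≤ x → f x ≤ g x) : opPerspective f A B ≤ opPerspective g A B := by
  have hC := one_le_mrpow_neg_half_conj hA hAB
  have hspec := (CFC.one_le_iff (R := ℝ) _ (IsSelfAdjoint.of_nonneg (zero_le_one.trans hC))).1 hC
  exact IsSelfAdjoint.conjugate_le_conjugate (cfc_mono (fun x hx ↦ hfg x (hspec x hx))
    (continuousOn_spectrum_real _ _) (continuousOn_spectrum_real _ _)) (mrpow_isSelfAdjoint A _)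

theorem tsallisEntropy_eq_opPerspective (hA : A.PosDef) (hB : B.IsHermitian) (p : ℝ) :
    TsallisEntropy A B p = opPerspective (fun x ↦ (x ^ p - 1) / p) A B := by
  have hf : (fun x : ℝ ↦ (x ^ p - 1) / p) = fun x ↦ 1 / p * (x ^ p - x ^ (0 : ℝ)) := by
    ext x; rw [Real.rpow_zero]; ring
  simp only [hf, opPerspective_const_mul, opPerspective_sub, opPerspective_rpow,
    natu_zero hA hB, TsallisEntropy]

theorem Jp_eq_opPerspective (hA : A.PosDef) (hB : B.IsHermitian) (p : ℝ) :
    Jp A B p = opPerspective (fun x ↦ (x ^ p - x ^ (p - 1) + x - 1) / 2) A B := by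
  have hf : (fun x : ℝ ↦ (x ^ p - x ^ (p - 1) + x - 1) / 2) =
      fun x ↦ 1 / 2 * (x ^ p - x ^ (p - 1) + x ^ (1 : ℝ) - x ^ (0 : ℝ)) := by
    ext x; rw [Real.rpow_zero, Real.rpow_one]; ring
  simp only [hf, opPerspective_const_mul, opPerspective_sub, opPerspective_add,
    opPerspective_rpow, natu_zero hA hB, natu_one hA hB, Jp]

theorem Rp_eq_opPerspective (hA : A.PosDef) (hB : B.IsHermitian) (p : ℝ) :
    Rp A B p = opPerspective (fun x ↦ (p - 1) * (p - 2) / 24 * (x - 1) ^ 3) A B := by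
  have hf : (fun x : ℝ ↦ (p - 1) * (p - 2) / 24 * (x - 1) ^ 3) =
      fun x ↦ 1 / 24 * (p - 1) * (p - 2) *
        (x ^ (3 : ℝ) - 3 * x ^ (2 : ℝ) + 3 * x ^ (1 : ℝ) - x ^ (0 : ℝ)) := by
    ext x; rw [Real.rpow_ofNat, Real.rpow_ofNat, Real.rpow_one, Real.rpow_zero]; ring
  simp only [hf, opPerspective_const_mul, opPerspective_sub, opPerspective_add,
    opPerspective_rpow, natu_zero hA hB, natu_one hA hB, Rp]

theorem Lp_eq_opPerspective (p : ℝ) :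
    Lp A B p = opPerspective (fun x ↦ 1 / 24 * (p - 1) * (p - 2) *
      (x ^ p - 3 * x ^ (p - 1) + 3 * x ^ (p - 2) - x ^ (p - 3))) A B := by
  simp only [opPerspective_const_mul, opPerspective_sub, opPerspective_add, opPerspective_rpow, Lp]

end OpPerspective

theorem stmt11_general {n : Type*} [Fintype n] [DecidableEq n] {A B : Matrix n n ℂ}
    (hA : A.PosDef) (hAB : loe A B)
    {p : ℝ} (hp0 : 0 < p) (hp1 : p ≤ 1) :
    loe (Jp A B p - (2 : ℝ) • Rp A B p) (TsallisEntropy A B p) ∧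
    loe (TsallisEntropy A B p) (Jp A B p - (2 : ℝ) • Lp A B p) := by
  have hB : B.IsHermitian := by simpa using hAB.isHermitian.add hA.isHermitian
  rw [tsallisEntropy_eq_opPerspective hA hB, Jp_eq_opPerspective hA hB,
    Rp_eq_opPerspective hA hB, Lp_eq_opPerspective, ← opPerspective_const_mul,
    ← opPerspective_const_mul, ← opPerspective_sub, ← opPerspective_sub]
  have hbounds (x : ℝ) (hx : 1 ≤ x) := rpow_trapezoid_error_bounds hp0.ne' hp1 hx
  constructor
  · exact opPerspective_mono hA hAB fun x hx ↦ by linear_combination (hbounds x hx).2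
  · exact opPerspective_mono hA hAB fun x hx ↦ by linear_combination (hbounds x hx).1

theorem stmt11 {n : Type*} [Fintype n] [DecidableEq n] {A B : Matrix n n ℂ}
    (hA : A.PosDef) (hB : B.PosDef) (hAB : loe A B)
    {p : ℝ} (hp0 : 0 < p) (hp1 : p ≤ 1) :
    loe (Jp A B p - (2 : ℝ) • Rp A B p) (TsallisEntropy A B p) ∧
    loe (TsallisEntropy A B p) (Jp A B p - (2 : ℝ) • Lp A B p) :=
  stmt11_general hA hAB hp0 hp1
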